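/- arXiv:0909.4009 — 3 statements merged into one kernel-verified Lean document; each statement's English description precedes it below -/
import Mathlib

section
/- (Chow–Gessel type identity for G(r,n)) For all positive integers r, n, as formal power series in t, q, a: Σ_{γ ∈ G(r,n)} t^{des_G(γ)} q^{maj(γ)} a^{col(γ)} / Π_{i=0}^{n}(1 − t q^{i}) = Σ_{k ≥ 0} t^k ([k+1]_q + a[r−1]_a [k]_q)^n, where [m]_q = 1+q+...+q^{m−1} and [r−1]_a = 1+a+...+a^{r−2}. -/
open Finset

namespace Paper

/-- An element of `G(r,n) = ℤ_r ≀ S_n`: a pair (underlying permutation, color vector). -/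
abbrev CPerm (r n : ℕ) := Equiv.Perm (Fin n) × (Fin n → Fin r)

/-- A colored sequence: values and colors. -/
abbrev CSeq (r n : ℕ) := (Fin n → ℕ) × (Fin n → Fin r)

variable {r n : ℕ}

/-- The order on colored integers (value, color):
`n^{r-1} < ⋯ < n^1 < ⋯ < 1^{r-1} < ⋯ < 1^1 < 0 < 1 < ⋯ < n`.
`clt a b` means `a < b`. -/
def clt (a b : ℕ × ℕ) : Prop :=
  (0 < a.2 ∧ b.2 = 0) ∨
  (0 < a.2 ∧ 0 < b.2 ∧ (b.1 < a.1 ∨ (a.1 = b.1 ∧ b.2 < a.2))) ∨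
  (a.2 = 0 ∧ b.2 = 0 ∧ a.1 < b.1)

instance (a b : ℕ × ℕ) : Decidable (clt a b) := by unfold clt; exact inferInstance

/-- The colored entry of `γ` at (0-based) position `i`: value `σ(i)` (1-based) with its color. -/
def entry (γ : CPerm r n) (i : Fin n) : ℕ × ℕ := ((γ.1 i : ℕ) + 1, (γ.2 i : ℕ))

/-- Window value `γ(i)` for `i ∈ [0,n]` (1-based positions), with `γ(0) := 0`. -/
def wval (γ : CPerm r n) (i : ℕ) : ℕ × ℕ :=
  if h : 1 ≤ i ∧ i ≤ n then ((γ.1 ⟨i - 1, by omega⟩ : ℕ) + 1, (γ.2 ⟨i - 1, by omega⟩ : ℕ))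
  else (0, 0)

/-- Descent set `Des_G(γ) = {i ∈ [0,n-1] : γ(i) > γ(i+1)}`, with `γ(0) := 0`. -/
def DesG (γ : CPerm r n) : Finset ℕ :=
  (range n).filter fun i => clt (wval γ (i + 1)) (wval γ i)

def desG (γ : CPerm r n) : ℕ := (DesG γ).card

def majG (γ : CPerm r n) : ℕ := ∑ i ∈ DesG γ, i

def colG (γ : CPerm r n) : ℕ := ∑ i, (γ.2 i : ℕ)

/-- Number of inversions: pairs `i < j` with `γ(i) > γ(j)` in the colored order. -/
def invG (γ : CPerm r n) : ℕ :=
  ((univ : Finset (Fin n × Fin n)).filter fun p =>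
    p.1 < p.2 ∧ clt (entry γ p.2) (entry γ p.1)).card

/-- Length `ℓ_G(γ) = inv(γ) + Σ_{c_i ≠ 0} (σ(i) + c_i - 1)` (σ(i) 1-based). -/
def lenG (γ : CPerm r n) : ℕ :=
  invG γ + ∑ i ∈ univ.filter (fun i => (γ.2 i : ℕ) ≠ 0), ((γ.1 i : ℕ) + (γ.2 i : ℕ))

/-- Membership in `N_0^{(r,n)}`: a zero value has color 0. -/
def ValidSeq (f : CSeq r n) : Prop := ∀ i, f.1 i = 0 → (f.2 i : ℕ) = 0

/-- The defining property of `π(f) = γ = (c;σ)`: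
`f_{σ(1)} ≤ … ≤ f_{σ(n)}`, `c_i(γ) = c_{σ(i)}(f)`, and `γ(i) < γ(i+1)` whenever
`f_{σ(i)} = f_{σ(i+1)}`. -/
def isPi (f : CSeq r n) (γ : CPerm r n) : Prop :=
  (∀ i j : Fin n, i ≤ j → f.1 (γ.1 i) ≤ f.1 (γ.1 j)) ∧
  (∀ i, γ.2 i = f.2 (γ.1 i)) ∧
  (∀ i j : Fin n, (i : ℕ) + 1 = (j : ℕ) → f.1 (γ.1 i) = f.1 (γ.1 j) →
    clt (entry γ i) (entry γ j))

def maxf (f : CSeq r n) : ℕ := univ.sup f.1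

def sumf (f : CSeq r n) : ℕ := ∑ i, f.1 i

/-- The partition `λ(f)` (relative to `γ = π(f)`), with values in `ℤ`:
`λ_i = f_{σ(i)} - #{j ∈ Des_G(γ) : j ≤ i-1}` (1-based `i`). -/
def lamZ (f : CSeq r n) (γ : CPerm r n) (i : Fin n) : ℤ :=
  (f.1 (γ.1 i) : ℤ) - ((DesG γ).filter (· ≤ (i : ℕ))).card

/-- 1-based reading of an `n`-tuple, with value `0` at index `0` (and outside `[1,n]`). -/
def mval (μ : Fin n → ℕ) (i : ℕ) : ℕ :=
  if h : 1 ≤ i ∧ i ≤ n then μ ⟨i - 1, by omega⟩ else 0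

/-- `μ` is `γ`-compatible: `μ_i < μ_{i+1}` for all `i ∈ Des_G(γ)` (with `μ_0 := 0`). -/
def compat (μ : Fin n → ℕ) (γ : CPerm r n) : Prop :=
  ∀ i ∈ DesG γ, mval μ i < mval μ (i + 1)

/-- The skew inverse `γ̃⁻¹ = (c_{σ⁻¹(1)},…,c_{σ⁻¹(n)}; σ⁻¹)`. -/
def skewInv (γ : CPerm r n) : CPerm r n := (γ.1⁻¹, fun i => γ.2 (γ.1⁻¹ i))

/-- The group inverse: `γ⁻¹ = (c'; σ⁻¹)` with `c'_i = (r - c_{σ⁻¹(i)}) mod r`. -/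
def cinv (γ : CPerm r n) : CPerm r n :=
  (γ.1⁻¹, fun i =>
    ⟨(r - (γ.2 (γ.1⁻¹ i) : ℕ)) % r,
      Nat.mod_lt _ (Nat.lt_of_le_of_lt (Nat.zero_le _) (γ.2 (γ.1⁻¹ i)).isLt)⟩)

/-- The group law of `G(r,n)`: `(c;σ)·(d;τ) = ((d_i + c_{τ(i)}) mod r; στ)`. -/
def cmul (x y : CPerm r n) : CPerm r n :=
  (x.1 * y.1, fun i =>
    ⟨((y.2 i : ℕ) + (x.2 (y.1 i) : ℕ)) % r,
      Nat.mod_lt _ (Nat.lt_of_le_of_lt (Nat.zero_le _) (y.2 i).isLt)⟩)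

/-- The color-forgetting projection `φ : G(r,n) → B_n = G(2,n)`. -/
def phi (γ : CPerm r n) : CPerm 2 n := (γ.1, fun i => ⟨min (γ.2 i : ℕ) 1, by omega⟩)

/-- `[m]_p = 1 + p + ⋯ + p^{m-1}`. -/
def qint {R : Type*} [CommRing R] (p : R) (m : ℕ) : R := ∑ j ∈ range m, p ^ j

/-- `[m]_p! = [1]_p [2]_p ⋯ [m]_p`. -/
def qfact {R : Type*} [CommRing R] (p : R) (m : ℕ) : R := ∏ j ∈ range m, qint p (j + 1)

/-- `[m̂]_{b,p}! = (1+bp)(1+bp²)⋯(1+bp^m)·[m]_p!`. -/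
def hqfact {R : Type*} [CommRing R] (b p : R) (m : ℕ) : R :=
  (∏ i ∈ range m, (1 + b * p ^ (i + 1))) * qfact p m

/-- A formal power series in two variables `X 0, X 1` from its coefficients. -/
def seriesOf2 (F : ℕ → ℕ → ℚ) : MvPowerSeries (Fin 2) ℚ := fun d => F (d 0) (d 1)

/-- A formal power series in three variables from its coefficients. -/
def seriesOf3 (F : ℕ → ℕ → ℕ → ℚ) : MvPowerSeries (Fin 3) ℚ := fun d => F (d 0) (d 1) (d 2)



/-!
Expand `1 / ∏_{i=0}^{n} (1 - t q^i)` as `∑_k t^k ∑_λ q^{|λ|}` over partitions `λ` with at most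
`n` parts, each at most `k`. The coefficient of `t^k q^m a^s` on the left then counts pairs
`(γ, λ)` with `col γ = s`, `λ_1 ≤ k - des γ` and `|λ| = m - maj γ`; on the right it counts words
of length `n` in the letters `v^c` (`c < r`, `v ≤ k`, and `v < k` when `c ≠ 0`) of total value `m`
and total color `s`.

The bijection sends `(γ, λ)` to the word whose letter at `σ(i)` is
`(λ_i + #{d ∈ Des_G γ | d ≥ i}, c_i)`. The added staircase makes the values weakly decreasing
along `σ`, strictly at the descents of `γ`. A colored entry is preceded by a descent, because
colored integers lie below `γ(0) = 0`, and this keeps its value below `k`. Conversely, sorting the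
positions of a word by decreasing value, ties broken by the colored order, recovers `γ`, and
removing the staircase recovers `λ`.
-/

def colorKey (e : ℕ × ℕ) : ℤ ×ₗ ℤ :=
  if e.2 = 0 then toLex ((e.1 : ℤ), 0) else toLex (-(e.1 : ℤ) - 1, -(e.2 : ℤ))

lemma colorKey_lt_colorKey_iff {a b : ℕ × ℕ} : colorKey a < colorKey b ↔ clt a b := by
  unfold colorKey clt
  split_ifs <;> simp only [Prod.Lex.toLex_lt_toLex] <;> omega

lemma colorKey_injective : Function.Injective colorKey := by
  intro a b h
  unfold colorKey at h
  split_ifs at h <;> simp only [EmbeddingLike.apply_eq_iff_eq, Prod.mk.injEq] at h <;>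
    ext <;> omega

lemma colorKey_lt_zero_iff {e : ℕ × ℕ} : colorKey e < colorKey (0, 0) ↔ e.2 ≠ 0 := by
  unfold colorKey
  split_ifs <;> simp only [Prod.Lex.toLex_lt_toLex] <;> omega

lemma wval_zero (γ : CPerm r n) : wval γ 0 = (0, 0) := by simp [wval]

lemma wval_succ (γ : CPerm r n) (i : Fin n) : wval γ (i + 1) = entry γ i := by
  simp [wval, entry]

lemma wval_ne_wval_succ (γ : CPerm r n) {p : ℕ} (hp : p < n) :
    wval γ p ≠ wval γ (p + 1) := by
  rw [wval_succ γ ⟨p, hp⟩]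
  rcases p with _ | p
  · simp [wval_zero, entry]
  · rw [wval_succ γ ⟨p, by omega⟩, Ne, entry, entry, Prod.mk.injEq, add_left_inj, Fin.val_inj,
      γ.1.injective.eq_iff]
    simp [Fin.ext_iff]

lemma mem_DesG_iff {γ : CPerm r n} {p : ℕ} :
    p ∈ DesG γ ↔ p < n ∧ colorKey (wval γ (p + 1)) < colorKey (wval γ p) := by
  simp [DesG, colorKey_lt_colorKey_iff]

lemma colorKey_wval_lt_of_notMem {γ : CPerm r n} {p : ℕ} (hp : p < n) (h : p ∉ DesG γ) :
    colorKey (wval γ p) < colorKey (wval γ (p + 1)) := by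
  rw [mem_DesG_iff, not_and, not_lt] at h
  exact (h hp).lt_of_ne (colorKey_injective.ne (wval_ne_wval_succ γ hp))

lemma mem_DesG_iff_of_val_eq_succ {γ : CPerm r n} {i j : Fin n} (hij : (j : ℕ) = i + 1) :
    (j : ℕ) ∈ DesG γ ↔ colorKey (entry γ j) < colorKey (entry γ i) := by
  rw [mem_DesG_iff, hij, wval_succ γ i, ← hij, wval_succ γ j]
  simp

lemma colorKey_entry_lt_of_notMem {γ : CPerm r n} {i j : Fin n} (hij : (j : ℕ) = i + 1)
    (h : (j : ℕ) ∉ DesG γ) : colorKey (entry γ i) < colorKey (entry γ j) := by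
  have := colorKey_wval_lt_of_notMem j.isLt h
  rwa [wval_succ, hij, wval_succ] at this

lemma zero_mem_DesG_iff {γ : CPerm r n} {i : Fin n} (hi : (i : ℕ) = 0) :
    0 ∈ DesG γ ↔ (γ.2 i : ℕ) ≠ 0 := by
  rw [mem_DesG_iff, ← hi, wval_succ, hi, wval_zero, colorKey_lt_zero_iff]
  simp [entry, hi ▸ i.isLt]

lemma exists_mem_DesG_lt_of_color_ne_zero (γ : CPerm r n) :
    ∀ p ≤ n, (wval γ p).2 ≠ 0 → ∃ d ∈ DesG γ, d < p := by
  intro p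
  induction p with
  | zero => simp [wval_zero]
  | succ p ih =>
    intro hp hcol
    by_cases hdes : p ∈ DesG γ
    · exact ⟨p, hdes, p.lt_succ_self⟩
    · have hlt := (colorKey_wval_lt_of_notMem hp hdes).trans (colorKey_lt_zero_iff.2 hcol)
      obtain ⟨d, hd, hdp⟩ := ih (Nat.le_of_succ_le hp) (colorKey_lt_zero_iff.1 hlt)
      exact ⟨d, hd, hdp.trans p.lt_succ_self⟩

def countGE (S : Finset ℕ) (p : ℕ) : ℕ := #{d ∈ S | p ≤ d}

lemma countGE_zero (S : Finset ℕ) : countGE S 0 = #S := by simp [countGE]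

lemma countGE_eq_countGE_succ_add (S : Finset ℕ) (p : ℕ) :
    countGE S p = countGE S (p + 1) + if p ∈ S then 1 else 0 := by
  have hsplit : {d ∈ S | p ≤ d} = {d ∈ S | p + 1 ≤ d} ∪ {d ∈ S | d = p} := by
    rw [← filter_or]; exact filter_congr fun d _ => by omega
  rw [countGE, countGE, hsplit, card_union_of_disjoint (disjoint_filter.2 fun d _ _ => by omega),
    filter_eq']
  split_ifs <;> simp

lemma countGE_eq_zero {S : Finset ℕ} {p : ℕ} (h : ∀ d ∈ S, d < p) : countGE S p = 0 := by
  simpa [countGE, filter_eq_empty_iff] using fun d hd => h d hd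

lemma countGE_lt_card {S : Finset ℕ} {d p : ℕ} (hd : d ∈ S) (hdp : d < p) :
    countGE S p < #S :=
  card_lt_card (filter_ssubset.2 ⟨d, hd, by omega⟩)

lemma sum_countGE_succ {S : Finset ℕ} (h : ∀ d ∈ S, d < n) :
    ∑ i : Fin n, countGE S (i + 1) = ∑ d ∈ S, d := by
  simp only [countGE, card_filter]
  rw [sum_comm]
  refine sum_congr rfl fun d hd => ?_
  rw [Fin.sum_univ_eq_sum_range (fun i => if i + 1 ≤ d then 1 else 0), sum_boole,
    show {i ∈ range n | i + 1 ≤ d} = range d by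
      ext i; simp only [mem_filter, mem_range]; have := h d hd; omega]
  simp

lemma strictMono_fin_of_lt_succ {α : Type*} [Preorder α] {f : Fin n → α}
    (h : ∀ i j : Fin n, (j : ℕ) = i + 1 → f i < f j) : StrictMono f := by
  cases n with
  | zero => exact fun i => i.elim0
  | succ m => exact Fin.strictMono_iff_lt_succ.2 fun i => h _ _ (by simp)

lemma antitone_fin_of_succ_le {α : Type*} [Preorder α] {f : Fin n → α}
    (h : ∀ i j : Fin n, (j : ℕ) = i + 1 → f j ≤ f i) : Antitone f := by
  cases n with
  | zero => exact fun i => i.elim0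
  | succ m => exact Fin.antitone_iff_succ_le.2 fun i => h _ _ (by simp)

lemma eq_sort_of_strictMono {α : Type*} [LinearOrder α] {f : Fin n → α}
    {σ : Equiv.Perm (Fin n)} (h : StrictMono (f ∘ σ)) : σ = Tuple.sort f :=
  Tuple.eq_sort_iff.2 ⟨h.monotone, fun _ _ hij heq => absurd heq (h hij).ne⟩

def partitions (n K M : ℕ) : Finset (Fin n → ℕ) :=
  {l ∈ Fintype.piFinset fun _ => range (K + 1) | Antitone l ∧ ∑ i, l i = M}

lemma mem_partitions {K M : ℕ} {l : Fin n → ℕ} :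
    l ∈ partitions n K M ↔ (∀ i, l i ≤ K) ∧ Antitone l ∧ ∑ i, l i = M := by
  simp [partitions]

lemma card_partitions_zero (K M : ℕ) : #(partitions 0 K M) = if M = 0 then 1 else 0 := by
  simp [partitions, Subsingleton.antitone, eq_comm, apply_ite card]

lemma antitone_snoc_zero {v : ℕ} {l : Fin v → ℕ} (hl : Antitone l) :
    Antitone (Fin.snoc l 0 : Fin (v + 1) → ℕ) := by
  intro i j hij
  induction j using Fin.lastCases with
  | last => simp
  | cast j =>
    induction i using Fin.lastCases with
    | last => exact absurd hij (not_le.2 (Fin.castSucc_lt_last j))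
    | cast i => simpa using hl (Fin.castSucc_le_castSucc_iff.1 hij)

lemma card_filter_last_eq_zero (v K M : ℕ) :
    #{l ∈ partitions (v + 1) K M | l (Fin.last v) = 0} = #(partitions v K M) := by
  refine card_nbij' Fin.init (Fin.snoc · 0) (fun l hl => ?_) (fun l hl => ?_)
    (fun l hl => ?_) (fun l _ => Fin.init_snoc _ _)
  · obtain ⟨hl, hlast⟩ := mem_filter.1 hl
    obtain ⟨hK, hanti, hM⟩ := mem_partitions.1 hl
    refine mem_partitions.2
      ⟨fun i => hK _, hanti.comp_monotone Fin.strictMono_castSucc.monotone, ?_⟩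
    rw [← hM, Fin.sum_univ_castSucc, hlast, add_zero]
    rfl
  · obtain ⟨hK, hanti, hM⟩ := mem_partitions.1 (mem_coe.1 hl)
    refine mem_filter.2 ⟨mem_partitions.2 ⟨fun i => ?_, antitone_snoc_zero hanti, ?_⟩, by simp⟩
    · induction i using Fin.lastCases <;> simp [hK]
    · simp [Fin.sum_univ_castSucc, hM]
  · have hlast := (mem_filter.1 hl).2
    simpa [hlast] using Fin.snoc_init_self l

lemma card_filter_last_ne_zero (v K M : ℕ) :
    #{l ∈ partitions (v + 1) (K + 1) (M + (v + 1)) | l (Fin.last v) ≠ 0} =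
      #(partitions (v + 1) K M) := by
  have hpos {l : Fin (v + 1) → ℕ} (hl : l ∈ {l ∈ partitions (v + 1) (K + 1) (M + (v + 1)) |
      l (Fin.last v) ≠ 0}) (i : Fin (v + 1)) : 1 ≤ l i := by
    obtain ⟨hl, hlast⟩ := mem_filter.1 hl
    have := (mem_partitions.1 hl).2.1 (Fin.le_last i)
    omega
  refine card_nbij' (fun l i => l i - 1) (fun l i => l i + 1) (fun l hl => ?_) (fun l hl => ?_)
    (fun l hl => funext fun i => by have := hpos hl i; simp only; omega)
    (fun l _ => funext fun i => by simp only; omega)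
  · have hl₁ := hpos hl
    obtain ⟨hK, hanti, hM⟩ := mem_partitions.1 (mem_filter.1 hl).1
    simp only [mem_coe, mem_partitions]
    refine ⟨fun i => by have := hK i; omega,
      fun i j hij => Nat.sub_le_sub_right (hanti hij) 1, ?_⟩
    rw [sum_tsub_distrib _ fun i _ => hl₁ i, hM]
    simp
  · obtain ⟨hK, hanti, hM⟩ := mem_partitions.1 (mem_coe.1 hl)
    simp only [mem_coe, mem_filter, mem_partitions]
    refine ⟨⟨fun i => by have := hK i; omega,
      fun i j hij => Nat.add_le_add_right (hanti hij) 1, ?_⟩, by omega⟩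
    simp [sum_add_distrib, hM]

lemma filter_last_ne_zero_eq_empty {v K M : ℕ} (h : ¬(1 ≤ K ∧ v + 1 ≤ M)) :
    {l ∈ partitions (v + 1) K M | l (Fin.last v) ≠ 0} = ∅ := by
  refine filter_eq_empty_iff.2 fun l hl hlast => h ?_
  obtain ⟨hK, hanti, hM⟩ := mem_partitions.1 hl
  have hpos (i : Fin (v + 1)) : 1 ≤ l i := by have := hanti (Fin.le_last i); omega
  refine ⟨(hpos _).trans (hK (Fin.last v)), ?_⟩
  calc v + 1 = ∑ _i : Fin (v + 1), 1 := by simp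
    _ ≤ M := hM ▸ sum_le_sum fun i _ => hpos i

lemma card_partitions_succ (v K M : ℕ) :
    #(partitions (v + 1) K M) = #(partitions v K M) +
      if 1 ≤ K ∧ v + 1 ≤ M then #(partitions (v + 1) (K - 1) (M - (v + 1))) else 0 := by
  rw [← card_filter_add_card_filter_not (fun l : Fin (v + 1) → ℕ => l (Fin.last v) = 0),
    card_filter_last_eq_zero]
  split_ifs with h
  · obtain ⟨K, rfl⟩ : ∃ K', K = K' + 1 := ⟨K - 1, by omega⟩
    obtain ⟨M, rfl⟩ : ∃ M', M = M' + (v + 1) := ⟨M - (v + 1), by omega⟩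
    simpa using card_filter_last_ne_zero v K M
  · rw [filter_last_ne_zero_eq_empty h, card_empty]

@[simp]
lemma coeff_seriesOf3 (F : ℕ → ℕ → ℕ → ℚ) (d : Fin 3 →₀ ℕ) :
    MvPowerSeries.coeff d (seriesOf3 F) = F (d 0) (d 1) (d 2) :=
  rfl

open MvPowerSeries in
lemma coeff_X_pow_mul_seriesOf3 (F : ℕ → ℕ → ℕ → ℚ) (a b c : ℕ) (d : Fin 3 →₀ ℕ) :
    coeff d ((X 0 : MvPowerSeries (Fin 3) ℚ) ^ a * X 1 ^ b * X 2 ^ c * seriesOf3 F) =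
      if a ≤ d 0 ∧ b ≤ d 1 ∧ c ≤ d 2 then F (d 0 - a) (d 1 - b) (d 2 - c) else 0 := by
  simp [X_pow_eq, monomial_mul_monomial, coeff_monomial_mul, Finsupp.le_def,
    Fin.forall_fin_succ, Finsupp.single_apply]

def partitionSeries (n : ℕ) : MvPowerSeries (Fin 3) ℚ :=
  seriesOf3 fun k m s => if s = 0 then (#(partitions n k m) : ℚ) else 0

open MvPowerSeries in
lemma coeff_X_pow_mul_partitionSeries (n a b c : ℕ) (d : Fin 3 →₀ ℕ) :
    coeff d ((X 0 : MvPowerSeries (Fin 3) ℚ) ^ a * X 1 ^ b * X 2 ^ c * partitionSeries n) =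
      if a ≤ d 0 ∧ b ≤ d 1 ∧ c = d 2 then (#(partitions n (d 0 - a) (d 1 - b)) : ℚ) else 0 := by
  rw [partitionSeries, coeff_X_pow_mul_seriesOf3]
  split_ifs <;> first | rfl | omega

open MvPowerSeries in
lemma coeff_one_sub_mul_partitionSeries (v w : ℕ) (d : Fin 3 →₀ ℕ) :
    coeff d ((1 - X 0 * X 1 ^ v) * partitionSeries w) =
      if d 2 = 0 then (#(partitions w (d 0) (d 1)) : ℚ) -
        if 1 ≤ d 0 ∧ v ≤ d 1 then (#(partitions w (d 0 - 1) (d 1 - v)) : ℚ) else 0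
      else 0 := by
  have hmono : (X 0 * X 1 ^ v : MvPowerSeries (Fin 3) ℚ) = X 0 ^ 1 * X 1 ^ v * X 2 ^ 0 := by ring
  rw [sub_mul, one_mul, map_sub, hmono, coeff_X_pow_mul_partitionSeries]
  rcases eq_or_ne (d 2) 0 with hd | hd
  · simp [partitionSeries, hd]
  · simp [partitionSeries, hd, hd.symm]

open MvPowerSeries in
lemma prod_one_sub_mul_partitionSeries (n : ℕ) :
    (∏ i ∈ range (n + 1), (1 - X 0 * X 1 ^ i : MvPowerSeries (Fin 3) ℚ)) *
      partitionSeries n = 1 := by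
  induction n with
  | zero =>
    ext d
    have hd : d = 0 ↔ d 0 = 0 ∧ d 1 = 0 ∧ d 2 = 0 := by
      simp [Finsupp.ext_iff, Fin.forall_fin_succ]
    rw [prod_range_one, coeff_one_sub_mul_partitionSeries, coeff_one]
    simp only [hd, card_partitions_zero]
    split_ifs <;> first | omega | norm_num
  | succ v ih =>
    have hstep : (1 - X 0 * X 1 ^ (v + 1)) * partitionSeries (v + 1) = partitionSeries v := by
      ext d
      rw [coeff_one_sub_mul_partitionSeries, partitionSeries, coeff_seriesOf3,
        card_partitions_succ]
      push_cast
      split_ifs <;> ring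
    rw [prod_range_succ, mul_assoc, hstep, ih]

open MvPowerSeries in
lemma inv_prod_one_sub_eq_partitionSeries (n : ℕ) :
    (∏ i ∈ range (n + 1), (1 - X 0 * X 1 ^ i : MvPowerSeries (Fin 3) ℚ))⁻¹ =
      partitionSeries n := by
  refine (MvPowerSeries.inv_eq_iff_mul_eq_one ?_).2
    (by rw [mul_comm, prod_one_sub_mul_partitionSeries])
  simp [map_prod]

def letters (r k : ℕ) : Finset (ℕ × ℕ) :=
  range (k + 1) ×ˢ {0} ∪ range k ×ˢ Ico 1 r

lemma mem_letters {k : ℕ} {e : ℕ × ℕ} :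
    e ∈ letters r k ↔ e.2 = 0 ∧ e.1 ≤ k ∨ 0 < e.2 ∧ e.2 < r ∧ e.1 < k := by
  simp only [letters, mem_union, mem_product, mem_range, mem_singleton, mem_Ico]
  omega

def words (r n k m s : ℕ) : Finset (Fin n → ℕ × ℕ) :=
  {g ∈ Fintype.piFinset fun _ => letters r k | ∑ i, (g i).1 = m ∧ ∑ i, (g i).2 = s}

def pairs (r n k m s : ℕ) : Finset (Σ _ : CPerm r n, Fin n → ℕ) :=
  univ.sigma fun γ => if desG γ ≤ k ∧ majG γ ≤ m ∧ colG γ = s then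
    partitions n (k - desG γ) (m - majG γ) else ∅

lemma mem_pairs {k m s : ℕ} {γ : CPerm r n} {l : Fin n → ℕ} :
    ⟨γ, l⟩ ∈ pairs r n k m s ↔ desG γ ≤ k ∧ majG γ ≤ m ∧ colG γ = s ∧
      l ∈ partitions n (k - desG γ) (m - majG γ) := by
  rw [pairs, mem_sigma]
  split_ifs with h
  · simp [h]
  · simpa using fun h₁ h₂ h₃ => absurd ⟨h₁, h₂, h₃⟩ h

-- Positions `i : Fin n` are 0-based, so `countGE (DesG γ) (i + 1)` counts the descents at or
-- after the 1-based position `i + 1`.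
def encode (γ : CPerm r n) (l : Fin n → ℕ) : Fin n → ℕ × ℕ :=
  (fun i => (l i + countGE (DesG γ) (i + 1), (γ.2 i : ℕ))) ∘ γ.1.symm

@[simp]
lemma encode_apply_perm (γ : CPerm r n) (l : Fin n → ℕ) (i : Fin n) :
    encode γ l (γ.1 i) = (l i + countGE (DesG γ) (i + 1), (γ.2 i : ℕ)) := by
  simp [encode]

-- Sorting the positions of `encode γ l` by this key gives back `γ.1`.
def wordKey (g : Fin n → ℕ × ℕ) (j : Fin n) : ℤ ×ₗ (ℤ ×ₗ ℤ) :=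
  toLex (-((g j).1 : ℤ), colorKey ((j : ℕ) + 1, (g j).2))

lemma wordKey_injective (g : Fin n → ℕ × ℕ) : Function.Injective (wordKey g) := by
  intro i j h
  have := congrArg Prod.fst (colorKey_injective (congrArg (fun x => (ofLex x).2) h))
  simpa [Fin.ext_iff] using this

lemma wordKey_lt_wordKey_iff {g : Fin n → ℕ × ℕ} {i j : Fin n} :
    wordKey g i < wordKey g j ↔ (g j).1 < (g i).1 ∨
      (g i).1 = (g j).1 ∧
        colorKey ((i : ℕ) + 1, (g i).2) < colorKey ((j : ℕ) + 1, (g j).2) := by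
  simp only [wordKey, Prod.Lex.toLex_lt_toLex, neg_lt_neg_iff, Nat.cast_lt, neg_inj, Nat.cast_inj]

lemma strictMono_wordKey_encode (γ : CPerm r n) {l : Fin n → ℕ} (hl : Antitone l) :
    StrictMono (wordKey (encode γ l) ∘ γ.1) := by
  refine strictMono_fin_of_lt_succ fun i j hij => ?_
  have hstep := countGE_eq_countGE_succ_add (DesG γ) (i + 1)
  have hlij := hl (show i ≤ j by simp [Fin.le_def, hij])
  simp only [Function.comp_apply, wordKey_lt_wordKey_iff, encode_apply_perm, hij]
  by_cases hdes : (i : ℕ) + 1 ∈ DesG γ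
  · rw [if_pos hdes] at hstep
    left
    omega
  · rw [if_neg hdes] at hstep
    rcases hlij.lt_or_eq with hlt | heq
    · left
      omega
    · right
      refine ⟨by omega, ?_⟩
      simpa [entry] using colorKey_entry_lt_of_notMem hij (hij ▸ hdes)

lemma encode_injective {γ γ' : CPerm r n} {l l' : Fin n → ℕ} (hl : Antitone l)
    (hl' : Antitone l') (h : encode γ l = encode γ' l') : γ = γ' ∧ l = l' := by
  have hperm : γ.1 = γ'.1 :=
    (eq_sort_of_strictMono (strictMono_wordKey_encode γ hl)).trans
      (eq_sort_of_strictMono (h ▸ strictMono_wordKey_encode γ' hl')).symm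
  have hval (i : Fin n) := congrFun h (γ.1 i)
  have hγ : γ = γ' := by
    refine Prod.ext hperm (funext fun i => Fin.ext ?_)
    have := congrArg Prod.snd (hval i)
    rwa [encode_apply_perm, hperm, encode_apply_perm] at this
  subst hγ
  refine ⟨rfl, funext fun i => ?_⟩
  have := congrArg Prod.fst (hval i)
  rw [encode_apply_perm, encode_apply_perm] at this
  omega

lemma sum_encode_fst (γ : CPerm r n) (l : Fin n → ℕ) :
    ∑ j, (encode γ l j).1 = ∑ i, l i + majG γ := by
  rw [← Equiv.sum_comp γ.1]
  simp only [encode_apply_perm, sum_add_distrib]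
  rw [sum_countGE_succ fun d hd => (mem_DesG_iff.1 hd).1, majG]

lemma sum_encode_snd (γ : CPerm r n) (l : Fin n → ℕ) : ∑ j, (encode γ l j).2 = colG γ := by
  rw [← Equiv.sum_comp γ.1]
  simp only [encode_apply_perm, colG]

lemma encode_mem_words {k m s : ℕ} {γ : CPerm r n} {l : Fin n → ℕ}
    (hx : ⟨γ, l⟩ ∈ pairs r n k m s) : encode γ l ∈ words r n k m s := by
  obtain ⟨hdes, hmaj, hcol, hl⟩ := mem_pairs.1 hx
  obtain ⟨hlk, -, hlm⟩ := mem_partitions.1 hl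
  refine mem_filter.2 ⟨Fintype.mem_piFinset.2 fun j => ?_, ?_, by rw [sum_encode_snd, hcol]⟩
  · obtain ⟨i, rfl⟩ := γ.1.surjective j
    rw [encode_apply_perm, mem_letters]
    have hcount : countGE (DesG γ) (i + 1) ≤ desG γ := card_filter_le _ _
    have := hlk i
    by_cases hc : (γ.2 i : ℕ) = 0
    · omega
    · obtain ⟨d, hd, hdi⟩ := exists_mem_DesG_lt_of_color_ne_zero γ (i + 1) i.isLt
        (by rwa [wval_succ])
      have : countGE (DesG γ) (i + 1) < desG γ := countGE_lt_card hd hdi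
      have := (γ.2 i).isLt
      omega
  · rw [sum_encode_fst, hlm]
    omega

lemma countGE_le_and_antitone_sub {S : Finset ℕ} (hS : ∀ d ∈ S, d < n) {V : Fin n → ℕ}
    (hV : ∀ i j : Fin n, (j : ℕ) = i + 1 → V j + (if (j : ℕ) ∈ S then 1 else 0) ≤ V i) :
    (∀ i : Fin n, countGE S (i + 1) ≤ V i) ∧ Antitone fun i => V i - countGE S (i + 1) := by
  have hU : Antitone fun i : Fin n => (V i : ℤ) - countGE S (i + 1) :=
    antitone_fin_of_succ_le fun i j hij => by
      have := hV i j hij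
      have := countGE_eq_countGE_succ_add S j
      rw [← hij]
      split_ifs at * <;> omega
  have hle (i : Fin n) : countGE S (i + 1) ≤ V i := by
    have := hU (show i ≤ ⟨n - 1, by have := i.isLt; omega⟩ from Nat.le_sub_one_of_lt i.isLt)
    dsimp only at this
    rw [countGE_eq_zero (p := n - 1 + 1) fun d hd => by have := hS d hd; omega] at this
    omega
  refine ⟨hle, fun i j hij => ?_⟩
  have := hU hij
  have := hle i
  have := hle j
  dsimp only at *
  omega

def sortedPerm (g : Fin n → ℕ × ℕ) (hc : ∀ j, (g j).2 < r) : CPerm r n :=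
  (Tuple.sort (wordKey g), fun i => ⟨(g (Tuple.sort (wordKey g) i)).2, hc _⟩)

lemma succ_le_of_sortedPerm {g : Fin n → ℕ × ℕ} (hc : ∀ j, (g j).2 < r) {i j : Fin n}
    (hij : (j : ℕ) = i + 1) :
    (g ((sortedPerm g hc).1 j)).1 + (if (j : ℕ) ∈ DesG (sortedPerm g hc) then 1 else 0) ≤
      (g ((sortedPerm g hc).1 i)).1 := by
  have hsorted : StrictMono (wordKey g ∘ Tuple.sort (wordKey g)) :=
    (Tuple.monotone_sort _).strictMono_of_injective
      ((wordKey_injective g).comp (Equiv.injective _))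
  have hlt := hsorted (show i < j by rw [Fin.lt_def]; omega)
  rw [Function.comp_apply, Function.comp_apply, wordKey_lt_wordKey_iff] at hlt
  change (g (Tuple.sort (wordKey g) j)).1 + _ ≤ (g (Tuple.sort (wordKey g) i)).1
  split_ifs with hdes
  · rw [mem_DesG_iff_of_val_eq_succ hij] at hdes
    rcases hlt with hlt | ⟨-, hkey⟩
    · exact hlt
    · exact (lt_asymm hkey hdes).elim
  · rcases hlt with hlt | ⟨heq, -⟩ <;> omega

lemma exists_mem_pairs_encode_eq (hr : 0 < r) {k m s : ℕ} {g : Fin n → ℕ × ℕ}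
    (hg : g ∈ words r n k m s) : ∃ γ l, ⟨γ, l⟩ ∈ pairs r n k m s ∧ encode γ l = g := by
  obtain ⟨hmem, hm, hs⟩ := mem_filter.1 hg
  have hletter (j : Fin n) := mem_letters.1 (Fintype.mem_piFinset.1 hmem j)
  have hc (j : Fin n) : (g j).2 < r := by have := hletter j; omega
  obtain ⟨hcount, hl⟩ := countGE_le_and_antitone_sub (fun d hd => (mem_DesG_iff.1 hd).1)
    fun i j hij => succ_le_of_sortedPerm hc hij
  set γ := sortedPerm g hc
  set l := fun i => (g (γ.1 i)).1 - countGE (DesG γ) (i + 1)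
  have hencode : encode γ l = g := by
    funext j
    obtain ⟨i, rfl⟩ := γ.1.surjective j
    rw [encode_apply_perm]
    have := hcount i
    ext
    · simp only [l]; omega
    · rfl
  have hbound (i : Fin n) : l i + desG γ ≤ k := by
    let i₀ : Fin n := ⟨0, by have := i.isLt; omega⟩
    have hanti : l i ≤ l i₀ := hl (show i₀ ≤ i from Nat.zero_le _)
    have hsplit : desG γ = countGE (DesG γ) (i₀ + 1) + if 0 ∈ DesG γ then 1 else 0 := by
      rw [desG, ← countGE_zero]
      exact countGE_eq_countGE_succ_add _ 0
    have hcolor : 0 ∈ DesG γ → (g (γ.1 i₀)).2 ≠ 0 := (zero_mem_DesG_iff rfl).1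
    have := hcount i₀
    have := hletter (γ.1 i₀)
    simp only [l] at hanti ⊢
    split_ifs at hsplit with h0
    · have := hcolor h0
      omega
    · omega
  have hdes : desG γ ≤ k := by
    rcases n.eq_zero_or_pos with rfl | hn
    · simp [desG, DesG]
    · have := hbound ⟨0, hn⟩
      omega
  have hsum := sum_encode_fst γ l
  rw [hencode, hm] at hsum
  refine ⟨γ, l,
    mem_pairs.2 ⟨hdes, by omega, ?_, mem_partitions.2 ⟨fun i => ?_, hl, by omega⟩⟩, hencode⟩
  · rw [← sum_encode_snd γ l, hencode, hs]
  · have := hbound i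
    omega

open MvPolynomial in
lemma sum_letters (k : ℕ) :
    ∑ e ∈ letters r k, (X 0 : MvPolynomial (Fin 2) ℚ) ^ e.1 * X 1 ^ e.2 =
      qint (X 0) (k + 1) + X 1 * qint (X 1) (r - 1) * qint (X 0) k := by
  have hdisj : Disjoint (range (k + 1) ×ˢ {0}) (range k ×ˢ Ico 1 r) :=
    disjoint_left.2 fun e h₁ h₂ => by
      simp only [mem_product, mem_singleton, mem_Ico] at h₁ h₂
      omega
  have hcolors :
      ∑ c ∈ Ico 1 r, (X 1 : MvPolynomial (Fin 2) ℚ) ^ c = X 1 * qint (X 1) (r - 1) := by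
    rw [sum_Ico_eq_sum_range, qint, mul_sum]
    simp only [pow_add, pow_one]
  rw [letters, sum_union hdisj, sum_product, sum_product]
  simp only [sum_singleton, pow_zero, mul_one, ← mul_sum, ← sum_mul, hcolors, qint]
  ring

open MvPolynomial in
lemma coeff_pow_sum_X_pow_mul_X_pow (A : Finset (ℕ × ℕ)) (n m s : ℕ) :
    coeff (Finsupp.single 0 m + Finsupp.single 1 s)
        ((∑ e ∈ A, (X 0 : MvPolynomial (Fin 2) ℚ) ^ e.1 * X 1 ^ e.2) ^ n) =
      (#{g ∈ Fintype.piFinset fun _ : Fin n => A | ∑ i, (g i).1 = m ∧ ∑ i, (g i).2 = s} :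
        ℚ) := by
  rw [← Fin.prod_const n, prod_univ_sum, coeff_sum, ← sum_boole]
  refine sum_congr rfl fun g _ => ?_
  rw [prod_mul_distrib, prod_pow_eq_pow_sum, prod_pow_eq_pow_sum, X_pow_eq_monomial,
    X_pow_eq_monomial, monomial_mul, one_mul, coeff_monomial]
  simp [Finsupp.ext_iff, Fin.forall_fin_two]

lemma card_pairs_eq_card_words (hr : 0 < r) (k m s : ℕ) :
    #(pairs r n k m s) = #(words r n k m s) := by
  refine card_bij (fun x _ => encode x.1 x.2) (fun ⟨γ, l⟩ hx => encode_mem_words hx)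
    (fun ⟨γ, l⟩ hx ⟨γ', l'⟩ hx' h => ?_) (fun g hg => ?_)
  · obtain ⟨rfl, rfl⟩ := encode_injective (mem_partitions.1 (mem_pairs.1 hx).2.2.2).2.1
      (mem_partitions.1 (mem_pairs.1 hx').2.2.2).2.1 h
    rfl
  · obtain ⟨γ, l, hx, rfl⟩ := exists_mem_pairs_encode_eq hr hg
    exact ⟨⟨γ, l⟩, hx, rfl⟩

lemma coeff_pow_eq_card_words (k m s : ℕ) :
    MvPolynomial.coeff (Finsupp.single 0 m + Finsupp.single 1 s)
        ((qint (MvPolynomial.X 0 : MvPolynomial (Fin 2) ℚ) (k + 1) +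
          MvPolynomial.X 1 * qint (MvPolynomial.X 1) (r - 1) * qint (MvPolynomial.X 0) k) ^ n) =
      (#(words r n k m s) : ℚ) := by
  rw [← sum_letters, coeff_pow_sum_X_pow_mul_X_pow]
  rfl

theorem stmt14_general (r n : ℕ) (hr : 0 < r) :
    (∑ γ : CPerm r n,
        (MvPowerSeries.X 0 : MvPowerSeries (Fin 3) ℚ) ^ desG γ *
          (MvPowerSeries.X 1) ^ majG γ * (MvPowerSeries.X 2) ^ colG γ) *
      (∏ i ∈ range (n + 1),
        (1 - (MvPowerSeries.X 0 : MvPowerSeries (Fin 3) ℚ) * (MvPowerSeries.X 1) ^ i))⁻¹ =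
      seriesOf3 fun k m s =>
        MvPolynomial.coeff (Finsupp.single 0 m + Finsupp.single 1 s)
          ((qint (MvPolynomial.X 0 : MvPolynomial (Fin 2) ℚ) (k + 1) +
              MvPolynomial.X 1 * qint (MvPolynomial.X 1) (r - 1) *
                qint (MvPolynomial.X 0) k) ^ n) := by
  rw [inv_prod_one_sub_eq_partitionSeries, sum_mul]
  ext d
  rw [map_sum, coeff_seriesOf3, coeff_pow_eq_card_words, ← card_pairs_eq_card_words hr, pairs,
    card_sigma, Nat.cast_sum]
  refine sum_congr rfl fun γ _ => ?_
  rw [coeff_X_pow_mul_partitionSeries]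
  split_ifs <;> simp

/-- Chow–Gessel type identity for `G(r,n)`, equation (7.1):
`Σ_{γ ∈ G(r,n)} t^{des_G γ} q^{maj γ} a^{col γ} / (t;q)_{n+1}
  = Σ_{k≥0} t^k ([k+1]_q + a[r−1]_a [k]_q)^n`,
as formal power series in `t = X 0`, `q = X 1`, `a = X 2`. -/
theorem stmt14 (r n : ℕ) (hr : 0 < r) (hn : 0 < n) :
    (∑ γ : CPerm r n,
        (MvPowerSeries.X 0 : MvPowerSeries (Fin 3) ℚ) ^ desG γ *
          (MvPowerSeries.X 1) ^ majG γ * (MvPowerSeries.X 2) ^ colG γ) *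
      (∏ i ∈ range (n + 1),
        (1 - (MvPowerSeries.X 0 : MvPowerSeries (Fin 3) ℚ) * (MvPowerSeries.X 1) ^ i))⁻¹ =
      seriesOf3 fun k m s =>
        MvPolynomial.coeff (Finsupp.single 0 m + Finsupp.single 1 s)
          ((qint (MvPolynomial.X 0 : MvPolynomial (Fin 2) ℚ) (k + 1) +
              MvPolynomial.X 1 * qint (MvPolynomial.X 1) (r - 1) *
                qint (MvPolynomial.X 0) k) ^ n) :=
  stmt14_general r n hr

end Paper
end

section
/- For every γ ∈ G(r,n), Σ_{f ∈ N_0^{(2,n)}, π(f) = φ(γ)} t^{max(f)} q^{n·max(f)−|f|} = Σ_{f ∈ N_0^{(r,n)}, π(f) = γ} t^{max(f)} q^{n·max(f)−|f|}, where φ(γ) ∈ B_n is the projection of γ, as identities of formal power series in t, q. -/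
open Finset

namespace Paper

variable {r n : ℕ}

lemma clt_min_iff {v c w d : ℕ} (h : v ≠ w) :
    clt (v, min c 1) (w, min d 1) ↔ clt (v, c) (w, d) := by
  unfold clt; simp only; omega

lemma entry_phi (γ : CPerm r n) (i : Fin n) :
    entry (phi γ) i = ((entry γ i).1, min (entry γ i).2 1) := rfl

lemma entry_fst_ne (γ : CPerm r n) {i j : Fin n} (h : i ≠ j) :
    (entry γ i).1 ≠ (entry γ j).1 := by
  simp only [entry]
  intro he
  exact h (γ.1.injective (Fin.ext (by omega)))

lemma clt_entry_phi_iff (γ : CPerm r n) {i j : Fin n} (h : i ≠ j) :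
    clt (entry (phi γ) i) (entry (phi γ) j) ↔ clt (entry γ i) (entry γ j) := by
  rw [entry_phi, entry_phi]
  exact clt_min_iff (entry_fst_ne γ h)

lemma key_ncard (r n : ℕ) (γ : CPerm r n) (k m : ℕ) :
    ({f : CSeq 2 n | ValidSeq f ∧ isPi f (phi γ) ∧ maxf f = k ∧
        n * k - sumf f = m}).ncard
      = ({f : CSeq r n | ValidSeq f ∧ isPi f γ ∧ maxf f = k ∧
        n * k - sumf f = m}).ncard := by
  set S2 := {f : CSeq 2 n | ValidSeq f ∧ isPi f (phi γ) ∧ maxf f = k ∧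
        n * k - sumf f = m} with hS2
  set Sr := {f : CSeq r n | ValidSeq f ∧ isPi f γ ∧ maxf f = k ∧
        n * k - sumf f = m} with hSr
  set Φ : CSeq 2 n → CSeq r n := fun f => (f.1, fun j => γ.2 (γ.1⁻¹ j)) with hΦ
  have hne : ∀ i j : Fin n, (i : ℕ) + 1 = (j : ℕ) → i ≠ j := by
    intro i j hij he; rw [he] at hij; omega
  -- color determination for the `2`-side
  have hcol2 : ∀ f : CSeq 2 n, isPi f (phi γ) → ∀ j, f.2 j = (phi γ).2 (γ.1⁻¹ j) := by
    intro f hf j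
    have := hf.2.1 (γ.1⁻¹ j)
    simpa [phi] using this.symm
  have hcolr : ∀ g : CSeq r n, isPi g γ → ∀ j, g.2 j = γ.2 (γ.1⁻¹ j) := by
    intro g hg j
    have := hg.2.1 (γ.1⁻¹ j)
    simpa using this.symm
  have hmaps : Set.MapsTo Φ S2 Sr := by
    intro f hf
    obtain ⟨hv, hpi, hmax, hsum⟩ := hf
    refine ⟨?_, ⟨hpi.1, ?_, ?_⟩, hmax, hsum⟩
    · intro j hz
      have h2 := hcol2 f hpi j
      have hz2 := hv j hz
      rw [h2] at hz2
      simp only [phi] at hz2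
      simp only [hΦ]
      omega
    · intro i
      simp [hΦ]
    · intro i j hij hval
      exact (clt_entry_phi_iff γ (hne i j hij)).mp (hpi.2.2 i j hij hval)
  have hinj : Set.InjOn Φ S2 := by
    intro f hf g hg he
    have h1 : f.1 = g.1 := by
      have := congrArg Prod.fst he
      simpa [hΦ] using this
    have h2 : f.2 = g.2 := by
      funext j
      rw [hcol2 f hf.2.1 j, hcol2 g hg.2.1 j]
    exact Prod.ext h1 h2
  have hsurj : Set.SurjOn Φ S2 Sr := by
    intro g hg
    obtain ⟨hv, hpi, hmax, hsum⟩ := hg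
    refine ⟨(g.1, fun j => (phi γ).2 (γ.1⁻¹ j)), ⟨?_, ⟨hpi.1, ?_, ?_⟩, hmax, hsum⟩, ?_⟩
    · intro j hz
      have h2 := hcolr g hpi j
      have hz2 := hv j hz
      rw [h2] at hz2
      simp only [phi]
      omega
    · intro i
      simp [phi]
    · intro i j hij hval
      exact (clt_entry_phi_iff γ (hne i j hij)).mpr (hpi.2.2 i j hij hval)
    · refine Prod.ext rfl ?_
      funext j
      exact (hcolr g hpi j).symm
  have himg : Φ '' S2 = Sr := Set.BijOn.image_eq ⟨hmaps, hinj, hsurj⟩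
  rw [← himg, Set.ncard_image_of_injOn hinj]

/-- Corollary 3.13: for every `γ ∈ G(r,n)`,
`Σ_{f ∈ N_0^{(2,n)}, π(f)=φ(γ)} t^{max f} q^{n·max f − |f|}
  = Σ_{f ∈ N_0^{(r,n)}, π(f)=γ} t^{max f} q^{n·max f − |f|}`,
as formal power series in `t = X 0`, `q = X 1`. -/
theorem stmt16 (r n : ℕ) (hr : 0 < r) (γ : CPerm r n) :
    (seriesOf2 fun k m =>
        (({f : CSeq 2 n | ValidSeq f ∧ isPi f (phi γ) ∧ maxf f = k ∧
            n * k - sumf f = m}).ncard : ℚ)) =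
      (seriesOf2 fun k m =>
        (({f : CSeq r n | ValidSeq f ∧ isPi f γ ∧ maxf f = k ∧
            n * k - sumf f = m}).ncard : ℚ)) := by
  funext d
  simp only [seriesOf2]
  rw [key_ncard r n γ (d 0) (d 1)]

end Paper
end

section
/- Every f ∈ N_0^{(r,n)} with max(f) ≤ k decomposes according to the fibers of the value-count map f ↦ (n_0,...,n_k), n_j := #{i : f_i = j}, and consequently Σ_{f ∈ N_0^{(r,n)}, max(f) ≤ k} q^{kn − |f|} p^{inv(f)} a^{col(f)} = Σ_{n_0+...+n_k = n} q^{Σ_j n_j (k−j)} · [n̂]_{a[r−1]_{ap},p}! / ([n̂_0]_{a[r−1]_{ap},p}! [n_1]_p! ··· [n_k]_p!). -/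
open Finset

namespace Paper

variable {r n : ℕ}

/-!
The length of `π f` can be read off `f` without sorting: it is the number of pairs of positions
`s < t` with `f_t < f_s` and `c_t = 0`, or `f_s < f_t` and `c_t ≠ 0`, plus `Σ_{c_t ≠ 0} (t + c_t)`
(positions from `0`). Both statistics grow letter by letter, so appending a letter of value `j` and
color `c` to a word of length `m` multiplies its weight by `p^#{letters > j}` if `c = 0` and by
`p^(#{letters < j} + m + c) a^c` otherwise. Summed over the colors and over `j`, these factors
telescope against `[n̂]_{b,p}! / [n̂ - 1]_{b,p}! = (1 + b p^n) [n]_p` with `b = a [r-1]_{ap}`, which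
shows by induction on `n` that the sum `F(v)` over the words with value counts `v` satisfies
`F(v) · [n̂_0]_{b,p}! [n_1]_p! ⋯ [n_k]_p! = [n̂]_{b,p}!`. On such a fiber `q^(kn - |f|)` is
constant.
-/

section QAnalogues

variable {R : Type*} [CommRing R] (b p : R) {m : ℕ}

lemma qint_add (x y : ℕ) : qint p (x + y) = qint p x + p ^ x * qint p y := by
  simp only [qint, sum_range_add, mul_sum, pow_add]

lemma qfact_succ (n : ℕ) : qfact p (n + 1) = qfact p n * qint p (n + 1) :=
  prod_range_succ _ _

lemma hqfact_succ (n : ℕ) :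
    hqfact b p (n + 1) = hqfact b p n * ((1 + b * p ^ (n + 1)) * qint p (n + 1)) := by
  simp only [hqfact, prod_range_succ, qfact_succ]; ring

def above (v : Fin m → ℕ) (j : Fin m) : ℕ := ∑ l with j < l, v l

def below (v : Fin m → ℕ) (j : Fin m) : ℕ := ∑ l with l < j, v l

lemma above_zero (v : Fin (m + 1) → ℕ) : above v 0 = ∑ l : Fin m, v l.succ := by
  simp [above, sum_filter, Fin.sum_univ_succ, Fin.succ_pos]

lemma above_zero_add (v : Fin (m + 1) → ℕ) : above v 0 + v 0 = ∑ l, v l := by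
  rw [above_zero, Fin.sum_univ_succ, add_comm]

lemma above_succ (v : Fin (m + 1) → ℕ) (j : Fin m) :
    above v j.succ = above (Fin.tail v) j := by
  simp [above, sum_filter, Fin.sum_univ_succ, Fin.tail]

lemma below_zero (v : Fin (m + 1) → ℕ) : below v 0 = 0 := by
  simp [below]

lemma below_succ (v : Fin (m + 1) → ℕ) (j : Fin m) :
    below v j.succ = v 0 + below (Fin.tail v) j := by
  simp [below, sum_filter, Fin.sum_univ_succ, Fin.tail, Fin.succ_pos]

lemma sum_pow_above_mul_qint (v : Fin m → ℕ) :
    ∑ j, p ^ above v j * qint p (v j) = qint p (∑ j, v j) := by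
  induction m with
  | zero => simp [qint]
  | succ m ih =>
    have := ih (Fin.tail v)
    simp only [Fin.tail] at this
    simp only [Fin.sum_univ_succ, above_zero, above_succ, this]
    rw [add_comm (v 0), qint_add]; ring

lemma sum_pow_below_mul_qint (v : Fin m → ℕ) :
    ∑ j, p ^ below v j * qint p (v j) = qint p (∑ j, v j) := by
  induction m with
  | zero => simp [qint]
  | succ m ih =>
    have := ih (Fin.tail v)
    simp only [Fin.tail] at this
    simp only [Fin.sum_univ_succ, below_zero, below_succ, pow_add, mul_assoc, ← mul_sum, this]
    rw [qint_add]; ring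

variable {k : ℕ}

def hatFact (j : Fin (k + 1)) (n : ℕ) : R := if j = 0 then hqfact b p n else qfact p n

def hatStep (j : Fin (k + 1)) (n : ℕ) : R := (if j = 0 then 1 + b * p ^ n else 1) * qint p n

lemma hatFact_succ (j : Fin (k + 1)) (n : ℕ) :
    hatFact b p j (n + 1) = hatFact b p j n * hatStep b p j (n + 1) := by
  unfold hatFact hatStep
  split_ifs <;> simp only [hqfact_succ, qfact_succ, one_mul]

lemma sum_mul_hatStep (v : Fin (k + 1) → ℕ) :
    ∑ j, (p ^ above v j + if j = 0 then 0 else b * p ^ (below v j + ∑ l, v l)) *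
        hatStep b p j (v j)
      = (1 + b * p ^ ∑ l, v l) * qint p (∑ l, v l) := by
  have hterm : ∀ j, (p ^ above v j + if j = 0 then 0 else b * p ^ (below v j + ∑ l, v l)) *
      hatStep b p j (v j)
        = p ^ above v j * qint p (v j) + b * p ^ (∑ l, v l) * (p ^ below v j * qint p (v j)) := by
    intro j
    rcases eq_or_ne j 0 with rfl | hj
    · simp only [hatStep, if_pos, below_zero, ← above_zero_add v, pow_add]; ring
    · simp only [hatStep, if_neg hj, pow_add]; ring
  rw [sum_congr rfl fun j _ => hterm j, sum_add_distrib, ← mul_sum, sum_pow_above_mul_qint,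
    sum_pow_below_mul_qint]
  ring

def hatDenom (v : Fin (k + 1) → ℕ) : R := ∏ j, hatFact b p j (v j)

lemma hatDenom_eq (v : Fin (k + 1) → ℕ) :
    hatDenom b p v = hqfact b p (v 0) * ∏ j with j ≠ 0, qfact p (v j) := by
  rw [hatDenom, ← mul_prod_erase univ _ (mem_univ 0), ← filter_ne']
  simp only [hatFact, if_pos]
  exact congrArg _ (prod_congr rfl fun j hj => if_neg (mem_filter.1 hj).2)

lemma hatDenom_eq_mul_hatStep (v : Fin (k + 1) → ℕ) {j : Fin (k + 1)} (hj : v j ≠ 0) :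
    hatDenom b p v = hatDenom b p (v - Pi.single j 1) * hatStep b p j (v j) := by
  obtain ⟨n, hn⟩ := Nat.exists_eq_add_one_of_ne_zero hj
  have hrest : ∏ l ∈ {j}ᶜ, hatFact b p l ((v - Pi.single j 1 : Fin (k + 1) → ℕ) l) =
      ∏ l ∈ {j}ᶜ, hatFact b p l (v l) :=
    prod_congr rfl fun l hl => by
      rw [Pi.sub_apply, Pi.single_eq_of_ne (by simpa using hl), Nat.sub_zero]
  rw [hatDenom, hatDenom, Fintype.prod_eq_mul_prod_compl j, Fintype.prod_eq_mul_prod_compl j,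
    hrest, Pi.sub_apply, Pi.single_eq_same, hn, Nat.add_sub_cancel, hatFact_succ]
  ring

end QAnalogues

section RingHom

variable {R S : Type*} [CommRing R] [CommRing S] (φ : R →+* S) {p : R}

lemma map_qint_succ_of_map_eq_zero (hp : φ p = 0) (n : ℕ) : φ (qint p (n + 1)) = 1 := by
  simp [qint, sum_range_succ', hp]

lemma map_hatDenom_of_map_eq_zero (b : R) (hp : φ p = 0) {k : ℕ} (v : Fin (k + 1) → ℕ) :
    φ (hatDenom b p v) = 1 := by
  simp [hatDenom, hatFact, hqfact, qfact, map_qint_succ_of_map_eq_zero φ hp, hp, apply_ite φ]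

end RingHom

lemma hatDenom_X_ne_zero {σ R : Type*} [CommRing R] [Nontrivial R] (b : MvPolynomial σ R) (i : σ)
    {k : ℕ} (v : Fin (k + 1) → ℕ) : hatDenom b (MvPolynomial.X i) v ≠ 0 := fun h => by
  have h1 := map_hatDenom_of_map_eq_zero (MvPolynomial.constantCoeff : MvPolynomial σ R →+* R) b
    (MvPolynomial.constantCoeff_X R i) v
  rw [h, map_zero] at h1
  exact zero_ne_one h1

section PairCounting

variable {α : Type*} [LinearOrder α] [Fintype α] (R : α → α → Prop) [DecidableRel R]

lemma two_mul_card_filter_lt (hR : ∀ s t, R s t → R t s) :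
    2 * #{x : α × α | x.1 < x.2 ∧ R x.1 x.2} = #{x : α × α | x.1 ≠ x.2 ∧ R x.1 x.2} := by
  have hswap : #{x : α × α | x.2 < x.1 ∧ R x.1 x.2} = #{x : α × α | x.1 < x.2 ∧ R x.1 x.2} :=
    card_equiv (Equiv.prodComm α α) fun x => by simp [(⟨hR _ _, hR _ _⟩ : R x.1 x.2 ↔ R x.2 x.1)]
  rw [two_mul]
  nth_rw 2 [← hswap]
  rw [← card_union_of_disjoint (disjoint_filter.2 fun x _ h1 h2 => lt_asymm h1.1 h2.1),
    ← filter_or]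
  simp only [ne_iff_lt_or_gt, or_and_right]

lemma card_filter_lt_comp_perm (hR : ∀ s t, R s t → R t s) (σ : Equiv.Perm α) :
    #{x : α × α | x.1 < x.2 ∧ R (σ x.1) (σ x.2)} = #{x : α × α | x.1 < x.2 ∧ R x.1 x.2} := by
  have hσ := two_mul_card_filter_lt (fun s t => R (σ s) (σ t)) fun _ _ => hR _ _
  have hne : #{x : α × α | x.1 ≠ x.2 ∧ R (σ x.1) (σ x.2)} = #{x : α × α | x.1 ≠ x.2 ∧ R x.1 x.2} :=
    card_equiv (σ.prodCongr σ) fun x => by simp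
  have := two_mul_card_filter_lt R hR
  omega

end PairCounting

section InversionStatistic

lemma clt_trans {a b c : ℕ × ℕ} (hab : clt a b) (hbc : clt b c) : clt a c := by
  unfold clt at *; omega

lemma clt_asymm {a b : ℕ × ℕ} (hab : clt a b) : ¬ clt b a := by
  unfold clt at *; omega

def IsInvPair (f : CSeq r n) (s t : Fin n) : Prop :=
  ((f.2 t : ℕ) = 0 ∧ f.1 t < f.1 s) ∨ ((f.2 t : ℕ) ≠ 0 ∧ f.1 s < f.1 t)

instance (f : CSeq r n) (s t : Fin n) : Decidable (IsInvPair f s t) := by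
  unfold IsInvPair; infer_instance

def invStat (f : CSeq r n) : ℕ := #{x : Fin n × Fin n | x.1 < x.2 ∧ IsInvPair f x.1 x.2}

def colStat (f : CSeq r n) : ℕ := ∑ t with (f.2 t : ℕ) ≠ 0, ((t : ℕ) + f.2 t)

lemma invStat_eq_sum (f : CSeq r n) : invStat f = ∑ t, #{s | s < t ∧ IsInvPair f s t} := by
  rw [invStat, card_filter, Fintype.sum_prod_type, sum_comm]
  simp only [card_filter]

variable {f : CSeq r n} {γ : CPerm r n}

lemma isPi.clt_entry_of_eq (h : isPi f γ) {i j : Fin n} (hij : i < j)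
    (heq : f.1 (γ.1 i) = f.1 (γ.1 j)) : clt (entry γ i) (entry γ j) := by
  obtain ⟨j, hj⟩ := j
  induction j with
  | zero => exact absurd (Fin.lt_def.1 hij) (Nat.not_lt_zero _)
  | succ j ih =>
    have hj' : j < n := by omega
    have hstep := h.2.2 ⟨j, hj'⟩ ⟨j + 1, hj⟩ rfl
    have hle : i ≤ ⟨j, hj'⟩ := Fin.le_def.2 (by simpa [Fin.lt_def, Nat.lt_succ_iff] using hij)
    rcases hle.lt_or_eq with hlt | rfl
    · have hmid : f.1 (γ.1 i) = f.1 (γ.1 ⟨j, hj'⟩) :=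
        le_antisymm (h.1 _ _ hle) (heq ▸ h.1 _ _ (Fin.le_def.2 (Nat.le_succ j)))
      exact clt_trans (ih hj' hlt hmid) (hstep (hmid ▸ heq))
    · exact hstep heq

lemma isPi.clt_entry_iff (h : isPi f γ) {i j : Fin n} (hij : i < j) :
    clt (entry γ j) (entry γ i) ↔
      (γ.1 i < γ.1 j ∧ IsInvPair f (γ.1 i) (γ.1 j)) ∨
        (γ.1 j < γ.1 i ∧ IsInvPair f (γ.1 j) (γ.1 i)) := by
  rcases (h.1 i j hij.le).eq_or_lt with heq | hlt
  · have hasc := h.clt_entry_of_eq hij heq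
    unfold IsInvPair
    constructor
    · exact fun hc => absurd hc (clt_asymm hasc)
    · omega
  · have hne : (γ.1 i : ℕ) ≠ γ.1 j := Fin.val_ne_of_ne (γ.1.injective.ne hij.ne)
    unfold entry IsInvPair clt
    simp only [h.2.1, Fin.lt_def]
    omega

lemma invG_eq_invStat (h : isPi f γ) : invG γ = invStat f := by
  set R : Fin n → Fin n → Prop := fun s t =>
    (s < t ∧ IsInvPair f s t) ∨ (t < s ∧ IsInvPair f t s) with hR
  have hsymm : ∀ s t, R s t → R t s := fun s t hst => by rw [hR] at *; tauto
  calc invG γ = #{x : Fin n × Fin n | x.1 < x.2 ∧ R (γ.1 x.1) (γ.1 x.2)} :=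
        congrArg card (filter_congr fun x _ => and_congr_right (h.clt_entry_iff ·))
    _ = #{x : Fin n × Fin n | x.1 < x.2 ∧ R x.1 x.2} := card_filter_lt_comp_perm R hsymm γ.1
    _ = invStat f := congrArg card (filter_congr fun x _ => and_congr_right fun hx => by
        simp only [hR, hx, true_and, lt_asymm hx, false_and, or_false])

lemma lenG_eq_of_isPi (h : isPi f γ) : lenG γ = invStat f + colStat f := by
  rw [lenG, invG_eq_invStat h, colStat, sum_filter, sum_filter,
    ← Equiv.sum_comp γ.1 (fun t => if (f.2 t : ℕ) ≠ 0 then (t : ℕ) + f.2 t else 0)]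
  simp only [h.2.1]

lemma colG_eq_of_isPi (h : isPi f γ) : colG γ = ∑ t, (f.2 t : ℕ) := by
  rw [colG, ← Equiv.sum_comp γ.1 (fun t => (f.2 t : ℕ))]
  simp only [h.2.1]

end InversionStatistic

instance (f : CSeq r n) : Decidable (ValidSeq f) := by unfold ValidSeq; infer_instance

abbrev Word (r k m : ℕ) := Fin m → Fin (k + 1) × Fin r

namespace Word

variable {k m : ℕ}

def toSeq (w : Word r k m) : CSeq r m := (fun i => (w i).1, fun i => (w i).2)

def content (w : Word r k m) (j : Fin (k + 1)) : ℕ := #{i | (w i).1 = j}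

def weight {R : Type*} [CommRing R] (p a : R) (w : Word r k m) : R :=
  p ^ (invStat w.toSeq + colStat w.toSeq) * a ^ ∑ i, ((w i).2 : ℕ)

lemma toSeq_injective : Function.Injective (toSeq : Word r k m → CSeq r m) := by
  intro w w' h
  simp only [toSeq, Prod.mk.injEq, funext_iff] at h
  exact funext fun i => Prod.ext (Fin.ext (h.1 i)) (h.2 i)

lemma sum_content (w : Word r k m) : ∑ j, w.content j = m := by
  simp only [content]
  rw [← card_eq_sum_card_fiberwise (fun _ _ => mem_univ _), card_univ, Fintype.card_fin]

lemma sumf_toSeq (w : Word r k m) : sumf w.toSeq = ∑ j, w.content j * j := by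
  simp only [sumf, toSeq, content,
    ← sum_fiberwise univ (fun i => (w i).1) (fun i => ((w i).1 : ℕ))]
  refine sum_congr rfl fun j _ => ?_
  rw [card_eq_sum_ones, sum_mul, one_mul]
  exact sum_congr rfl fun i hi => by rw [(mem_filter.1 hi).2]

lemma card_filter_comp_eq_sum (w : Word r k m) (P : Fin (k + 1) → Prop) [DecidablePred P] :
    #{i | P (w i).1} = ∑ j with P j, w.content j := by
  rw [card_eq_sum_card_fiberwise (t := univ.filter P) (fun i hi => by simpa using hi)]
  refine sum_congr rfl fun j hj => by
    rw [filter_filter]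
    exact congrArg card
      (filter_congr fun i _ => ⟨fun h => h.2, fun h => ⟨h ▸ (mem_filter.1 hj).2, h⟩⟩)

abbrev snoc (w : Word r k m) (x : Fin (k + 1) × Fin r) : Word r k (m + 1) := Fin.snoc w x

lemma sum_univ_succ {M : Type*} [AddCommMonoid M] (φ : Word r k (m + 1) → M) :
    ∑ w, φ w = ∑ x : Fin (k + 1) × Fin r, ∑ w : Word r k m, φ (w.snoc x) := by
  rw [← (Fin.snocEquiv fun _ => Fin (k + 1) × Fin r).sum_comp, Fintype.sum_prod_type]
  rfl

variable (w : Word r k m) (x : Fin (k + 1) × Fin r)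

lemma validSeq_toSeq_snoc :
    ValidSeq (w.snoc x).toSeq ↔
      ValidSeq w.toSeq ∧ (x.1 = 0 → (x.2 : ℕ) = 0) := by
  simp [ValidSeq, toSeq, Fin.forall_fin_succ']

lemma content_snoc : (w.snoc x).content = w.content + Pi.single x.1 1 := by
  ext j
  simp only [content, card_filter, Fin.sum_univ_castSucc, snoc, Fin.snoc_castSucc, Fin.snoc_last,
    Pi.add_apply, Pi.single_apply, eq_comm (a := j)]

lemma invStat_toSeq_snoc :
    invStat (w.snoc x).toSeq =
      invStat w.toSeq + if (x.2 : ℕ) = 0 then above w.content x.1 else below w.content x.1 := by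
  rw [invStat_eq_sum, invStat_eq_sum, Fin.sum_univ_castSucc]
  congr 1
  · refine sum_congr rfl fun t _ => ?_
    simp only [card_filter, Fin.sum_univ_castSucc]
    simp [IsInvPair, toSeq, (Fin.castSucc_lt_last t).not_gt]
  · simp only [card_filter, Fin.sum_univ_castSucc]
    simp only [IsInvPair, toSeq, snoc, Fin.snoc_last, Fin.snoc_castSucc, Fin.castSucc_lt_last,
      Fin.val_fin_lt, true_and, sum_boole, Nat.cast_id, lt_self_iff_false, and_false, or_self,
      and_self, if_false, add_zero]
    split_ifs with hc
    · rw [above, ← card_filter_comp_eq_sum w (x.1 < ·)]; simp [hc]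
    · rw [below, ← card_filter_comp_eq_sum w (· < x.1)]; simp [hc]

lemma colStat_toSeq_snoc :
    colStat (w.snoc x).toSeq = colStat w.toSeq + if (x.2 : ℕ) ≠ 0 then m + x.2 else 0 := by
  rw [colStat, colStat, sum_filter, sum_filter, Fin.sum_univ_castSucc]
  simp only [toSeq, snoc, Fin.snoc_castSucc, Fin.snoc_last, Fin.val_castSucc, Fin.val_last]
  rfl

variable {R : Type*} [CommRing R] (p a : R)

def appendWeight (u : Fin (k + 1) → ℕ) (m : ℕ) (x : Fin (k + 1) × Fin r) : R :=
  p ^ (if (x.2 : ℕ) = 0 then above u x.1 else below u x.1 + m + x.2) * a ^ (x.2 : ℕ)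

lemma weight_snoc : (w.snoc x).weight p a = w.weight p a * appendWeight p a w.content m x := by
  rw [weight, weight, appendWeight, invStat_toSeq_snoc, colStat_toSeq_snoc]
  simp only [Fin.sum_univ_castSucc, snoc, Fin.snoc_castSucc, Fin.snoc_last]
  by_cases hc : (x.2 : ℕ) = 0 <;> simp [hc, pow_add] <;> ring

end Word

lemma add_single_one_eq_iff {ι : Type*} [DecidableEq ι] (u v : ι → ℕ) (j : ι) :
    u + Pi.single j 1 = v ↔ v j ≠ 0 ∧ u = v - Pi.single j 1 := by
  simp only [funext_iff, Pi.add_apply, Pi.sub_apply, Pi.single_apply]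
  constructor
  · intro h
    refine ⟨by simp [← h j], fun l => ?_⟩
    have := h l
    split_ifs at this ⊢ <;> omega
  · rintro ⟨hj, h⟩ l
    have := h l
    split_ifs at this ⊢ with hl
    · subst hl; omega
    · omega

lemma sum_sub_single_one_add_one {ι : Type*} [Fintype ι] [DecidableEq ι] {v : ι → ℕ} {j : ι}
    (hj : v j ≠ 0) : ∑ l, (v - Pi.single j 1 : ι → ℕ) l + 1 = ∑ l, v l := by
  conv_rhs => rw [← ((add_single_one_eq_iff _ v j).2 ⟨hj, rfl⟩)]
  simp only [Pi.add_apply, Finset.sum_add_distrib, sum_pi_single', if_pos (mem_univ j)]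

section FiberSum

variable {R : Type*} [CommRing R] (p a : R) {k : ℕ}

def fiberSum (r m : ℕ) (v : Fin (k + 1) → ℕ) : R :=
  ∑ w : Word r k m with ValidSeq w.toSeq ∧ w.content = v, w.weight p a

lemma above_sub_single (v : Fin (k + 1) → ℕ) (j : Fin (k + 1)) :
    above (v - Pi.single j 1) j = above v j :=
  sum_congr rfl fun l hl => by
    simp [Pi.single_eq_of_ne (mem_filter.1 hl).2.ne']

lemma below_sub_single (v : Fin (k + 1) → ℕ) (j : Fin (k + 1)) :
    below (v - Pi.single j 1) j = below v j :=
  sum_congr rfl fun l hl => by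
    simp [Pi.single_eq_of_ne (mem_filter.1 hl).2.ne]

lemma fiberSum_succ_eq_sum_appendWeight (r m : ℕ) (v : Fin (k + 1) → ℕ) :
    fiberSum p a r (m + 1) v =
      ∑ x : Fin (k + 1) × Fin r,
        if (x.1 = 0 → (x.2 : ℕ) = 0) ∧ v x.1 ≠ 0 then
          Word.appendWeight p a (v - Pi.single x.1 1) m x * fiberSum p a r m (v - Pi.single x.1 1)
        else 0 := by
  rw [fiberSum, sum_filter, Word.sum_univ_succ]
  refine sum_congr rfl fun x _ => ?_
  simp only [Word.validSeq_toSeq_snoc, Word.content_snoc, add_single_one_eq_iff, Word.weight_snoc]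
  split_ifs with hx
  · rw [fiberSum, sum_filter, mul_sum]
    refine sum_congr rfl fun w _ => ?_
    by_cases hw : ValidSeq w.toSeq ∧ w.content = v - Pi.single x.1 1
    · rw [if_pos ⟨⟨hw.1, hx.1⟩, hx.2, hw.2⟩, if_pos hw, hw.2, mul_comm]
    · rw [if_neg (by tauto), if_neg hw, mul_zero]
  · exact sum_eq_zero fun w _ => if_neg (by tauto)

lemma sum_appendWeight (hr : 0 < r) (u : Fin (k + 1) → ℕ) (m : ℕ) (j : Fin (k + 1)) :
    ∑ c : Fin r, (if j = 0 → (c : ℕ) = 0 then Word.appendWeight p a u m (j, c) else 0) =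
      p ^ above u j + if j = 0 then 0 else a * qint (a * p) (r - 1) * p ^ (below u j + m + 1) := by
  obtain ⟨s, rfl⟩ : ∃ s, r = s + 1 := ⟨r - 1, by omega⟩
  rw [Fin.sum_univ_succ]
  simp only [Word.appendWeight, Fin.val_zero, Fin.val_succ, imp_true_iff, if_true, pow_zero,
    mul_one, Nat.add_one_ne_zero, if_false, Nat.add_sub_cancel]
  rcases eq_or_ne j 0 with rfl | hj
  · simp
  · simp only [hj, false_imp_iff, if_true, if_false, qint, mul_sum, sum_mul]
    rw [Fin.sum_univ_eq_sum_range (fun i => p ^ (below u j + m + (i + 1)) * a ^ (i + 1)) s]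
    exact congrArg _ (sum_congr rfl fun i _ => by ring)

lemma fiberSum_succ (hr : 0 < r) (m : ℕ) (v : Fin (k + 1) → ℕ) :
    fiberSum p a r (m + 1) v =
      ∑ j, if v j = 0 then 0 else
        (p ^ above v j +
            if j = 0 then 0 else a * qint (a * p) (r - 1) * p ^ (below v j + (m + 1))) *
          fiberSum p a r m (v - Pi.single j 1) := by
  rw [fiberSum_succ_eq_sum_appendWeight, Fintype.sum_prod_type]
  refine sum_congr rfl fun j _ => ?_
  by_cases hj : v j = 0
  · exact (if_pos hj).symm ▸ sum_eq_zero fun c _ => if_neg fun h => h.2 hj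
  · simp only [hj, ne_eq, not_false_eq_true, and_true, if_false]
    rw [← above_sub_single v j, ← below_sub_single v j, ← add_assoc, ← sum_appendWeight p a hr,
      sum_mul]
    exact sum_congr rfl fun c _ => (ite_zero_mul _ _ _).symm

theorem fiberSum_mul_hatDenom (hr : 0 < r) (m : ℕ) (v : Fin (k + 1) → ℕ) (hv : ∑ j, v j = m) :
    fiberSum p a r m v * hatDenom (a * qint (a * p) (r - 1)) p v =
      hqfact (a * qint (a * p) (r - 1)) p m := by
  set b := a * qint (a * p) (r - 1)
  induction m generalizing v with
  | zero =>
    have hv0 : v = 0 := funext fun j => (sum_eq_zero_iff.1 hv) j (mem_univ j)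
    subst hv0
    have hempty : ∀ w : Word r k 0, w.content = 0 := fun w => funext fun j => by simp [Word.content]
    simp [fiberSum, hempty, Word.weight, invStat, colStat, hatDenom, hatFact, hqfact, qfact,
      ValidSeq]
  | succ m ih =>
    have hterm : ∀ j, (if v j = 0 then 0 else
        (p ^ above v j + if j = 0 then 0 else b * p ^ (below v j + (m + 1))) *
          fiberSum p a r m (v - Pi.single j 1)) * hatDenom b p v =
        (p ^ above v j + if j = 0 then 0 else b * p ^ (below v j + (m + 1))) *
          hatStep b p j (v j) * hqfact b p m := by
      intro j
      by_cases hj : v j = 0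
      · simp [hj, hatStep, qint]
      · rw [if_neg hj, hatDenom_eq_mul_hatStep b p v hj,
          ← ih (v - Pi.single j 1) (by have := sum_sub_single_one_add_one hj; omega)]
        ring
    have hstep := sum_mul_hatStep b p v
    rw [hv] at hstep
    rw [fiberSum_succ p a hr, sum_mul, sum_congr rfl fun j _ => hterm j, ← sum_mul, hstep,
      hqfact_succ]
    ring

end FiberSum

lemma mul_sum_sub_sum_mul_eq_sum_mul_sub {k : ℕ} (v : Fin (k + 1) → ℕ) :
    k * ∑ j, v j - ∑ j, v j * j = ∑ j, v j * (k - j) := by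
  have h : ∑ j, v j * (k - j) + ∑ j : Fin (k + 1), v j * j = k * ∑ j, v j := by
    rw [← sum_add_distrib, mul_sum]
    refine sum_congr rfl fun j _ => ?_
    rw [← mul_add, Nat.sub_add_cancel j.is_le, mul_comm]
  omega

lemma setOf_validSeq_maxf_le (k : ℕ) :
    {f : CSeq r n | ValidSeq f ∧ maxf f ≤ k} =
      ((univ.filter fun w : Word r k n => ValidSeq w.toSeq).image Word.toSeq : Set (CSeq r n)) := by
  ext f
  simp only [Set.mem_ofPred_eq, coe_image, coe_filter, mem_univ, true_and, Set.mem_image]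
  constructor
  · rintro ⟨hf, hmax⟩
    exact ⟨fun i => (⟨f.1 i, Nat.lt_succ_of_le ((le_sup (mem_univ i)).trans hmax)⟩, f.2 i), hf,
      rfl⟩
  · rintro ⟨w, hw, rfl⟩
    exact ⟨hw, Finset.sup_le fun i _ => Nat.lt_succ_iff.1 (w i).1.isLt⟩

theorem finsum_eq_sum_fiberSum {R : Type*} [CommRing R] (k : ℕ) (π : CSeq r n → CPerm r n)
    (hπ : ∀ f, ValidSeq f → isPi f (π f)) (q p a : R) :
    ∑ᶠ f ∈ {f : CSeq r n | ValidSeq f ∧ maxf f ≤ k},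
        q ^ (k * n - sumf f) * p ^ lenG (π f) * a ^ colG (π f) =
      ∑ v ∈ Nat.antidiagonalTuple (k + 1) n,
        q ^ (∑ j : Fin (k + 1), v j * (k - j)) * fiberSum p a r n v := by
  have hterm : ∀ w ∈ univ.filter fun w : Word r k n => ValidSeq w.toSeq,
      q ^ (k * n - sumf w.toSeq) * p ^ lenG (π w.toSeq) * a ^ colG (π w.toSeq) =
        q ^ (∑ j : Fin (k + 1), w.content j * (k - j)) * w.weight p a := fun w hw => by
    have hpi := hπ _ (mem_filter.1 hw).2
    rw [lenG_eq_of_isPi hpi, colG_eq_of_isPi hpi, Word.sumf_toSeq,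
      ← mul_sum_sub_sum_mul_eq_sum_mul_sub, Word.sum_content, mul_assoc, Word.weight]
    rfl
  rw [setOf_validSeq_maxf_le, finsum_mem_coe_finset, sum_image Word.toSeq_injective.injOn,
    sum_congr rfl hterm, ← sum_fiberwise_of_maps_to (g := Word.content)
      fun w _ => Nat.mem_antidiagonalTuple.2 w.sum_content]
  refine sum_congr rfl fun v _ => ?_
  rw [fiberSum, filter_filter, mul_sum]
  exact sum_congr rfl fun w hw => by rw [(mem_filter.1 hw).2.2]

/-- proof of Theorem 5.1: for every `k`,
`Σ_{f ∈ N_0^{(r,n)}, max f ≤ k} q^{kn−|f|} p^{inv f} a^{col f}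
  = Σ_{n_0+⋯+n_k=n} q^{Σ_j n_j(k−j)} [n̂]_{a[r−1]_{ap},p}! /
      ([n̂_0]_{a[r−1]_{ap},p}! [n_1]_p! ⋯ [n_k]_p!)`,
in the fraction field of `ℚ[q,p,a]` with `q = X 0`, `p = X 1`, `a = X 2`. -/
theorem stmt19 (r n k : ℕ) (hr : 0 < r)
    (π : CSeq r n → CPerm r n)
    (hπ : ∀ f, ValidSeq f → isPi f (π f) ∧ ∀ γ, isPi f γ → γ = π f) :
    (algebraMap (MvPolynomial (Fin 3) ℚ) (FractionRing (MvPolynomial (Fin 3) ℚ)))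
        (∑ᶠ f ∈ {f : CSeq r n | ValidSeq f ∧ maxf f ≤ k},
          (MvPolynomial.X 0 : MvPolynomial (Fin 3) ℚ) ^ (k * n - sumf f) *
            (MvPolynomial.X 1) ^ lenG (π f) * (MvPolynomial.X 2) ^ colG (π f)) =
      ∑ v ∈ Finset.Nat.antidiagonalTuple (k + 1) n,
        (algebraMap (MvPolynomial (Fin 3) ℚ) (FractionRing (MvPolynomial (Fin 3) ℚ)))
            ((MvPolynomial.X 0 : MvPolynomial (Fin 3) ℚ) ^ (∑ j : Fin (k + 1), v j * (k - (j : ℕ))) *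
              hqfact (MvPolynomial.X 2 * qint (MvPolynomial.X 2 * MvPolynomial.X 1) (r - 1))
                (MvPolynomial.X 1) n) /
          ((algebraMap (MvPolynomial (Fin 3) ℚ) (FractionRing (MvPolynomial (Fin 3) ℚ)))
              (hqfact (MvPolynomial.X 2 * qint (MvPolynomial.X 2 * MvPolynomial.X 1) (r - 1))
                (MvPolynomial.X 1) (v 0)) *
            ∏ j ∈ univ.filter (fun j : Fin (k + 1) => j ≠ 0),
              (algebraMap (MvPolynomial (Fin 3) ℚ) (FractionRing (MvPolynomial (Fin 3) ℚ)))
                (qfact (MvPolynomial.X 1) (v j))) := by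
  rw [finsum_eq_sum_fiberSum k π (fun f hf => (hπ f hf).1), map_sum]
  refine sum_congr rfl fun v hv => ?_
  rw [← map_prod, ← map_mul, ← hatDenom_eq,
    ← fiberSum_mul_hatDenom _ _ hr n v (Nat.mem_antidiagonalTuple.1 hv), ← mul_assoc,
    map_mul _ (_ * _), mul_div_cancel_right₀ _
      ((map_ne_zero_iff _ (IsFractionRing.injective _ _)).2 (hatDenom_X_ne_zero _ _ v))]

end Paper
end
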